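/- arXiv:2305.18301 — 3 statements merged into one kernel-verified Lean document; each statement's English description precedes it below -/
import Mathlib

section
/- Let n = m + k, let L(q₁, …, qₙ, v₁, …, vₙ, t) be differentiable in the velocity variables v, and let α_ν(q₁, …, qₙ, u₁, …, u_m, t), ν = 1, …, k, be differentiable in u. Define the restricted Lagrangian L*(q, u, t) := L(q, (u₁, …, u_m, α₁(q,u,t), …, α_k(q,u,t)), t), the energy E(q, v, t) := Σ_{i=1}^n v_i ∂L/∂v_i − L, and the restricted energy E*(q, u, t) := Σ_{r=1}^m u_r ∂L*/∂u_r − L*. Then for all (q, u, t): E*(q, u, t) = E(q, (u, α(q,u,t)), t) + Σ_{ν=1}^k (ᾱ_ν − α_ν) ∂L/∂v_{m+ν}(q, (u, α(q,u,t)), t), where ᾱ_ν := Σ_{r=1}^m (∂α_ν/∂u_r) u_r. -/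
/-!
The sum `∑ r, u r * ∂L*/∂u_r` is the derivative of `L*` in the direction `u`, which by the
chain rule through the graph map `u ↦ (u, α u)` equals `DL (u, 0) + DL (0, Dα u)`. Expanding in coordinates, the second term is
`∑ ν, ᾱ_ν ∂L/∂v_{m+ν}`, whereas the energy `E` carries `∑ ν, α_ν ∂L/∂v_{m+ν}` in its place.
-/

theorem sum_smul_map_single {R M F ι : Type*} [Semiring R] [AddCommMonoid M] [Module R M]
    [Fintype ι] [DecidableEq ι] [FunLike F (ι → R) M] [LinearMapClass F R (ι → R) M]
    (f : F) (x : ι → R) : ∑ i, x i • f (Pi.single i 1) = f x := by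
  conv_rhs => rw [pi_eq_sum_univ' x]
  simp only [map_sum, map_smul]

theorem fderiv_comp_graph_apply {𝕜 E F G : Type*} [NontriviallyNormedField 𝕜]
    [NormedAddCommGroup E] [NormedSpace 𝕜 E] [NormedAddCommGroup F] [NormedSpace 𝕜 F]
    [NormedAddCommGroup G] [NormedSpace 𝕜 G] {f : E × F → G} {g : E → F} {u : E}
    (hf : DifferentiableAt 𝕜 f (u, g u)) (hg : DifferentiableAt 𝕜 g u) (x : E) :
    fderiv 𝕜 (fun u' => f (u', g u')) u x
      = fderiv 𝕜 f (u, g u) (x, 0) + fderiv 𝕜 f (u, g u) (0, fderiv 𝕜 g u x) := by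
  have hcomp : HasFDerivAt (fun u' => f (u', g u'))
      ((fderiv 𝕜 f (u, g u)).comp ((ContinuousLinearMap.id 𝕜 E).prod (fderiv 𝕜 g u))) u :=
    hf.hasFDerivAt.comp u ((hasFDerivAt_id u).prodMk hg.hasFDerivAt)
  rw [hcomp.fderiv, ← map_add]
  simp

theorem restricted_energy_eq_energy_add_correction_general
    {n m k : ℕ}
    (L : (Fin n → ℝ) → ((Fin m → ℝ) × (Fin k → ℝ)) → ℝ → ℝ)
    (α : Fin k → (Fin n → ℝ) → (Fin m → ℝ) → ℝ → ℝ)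
    (hL : ∀ q t, Differentiable ℝ (fun v => L q v t))
    (hα : ∀ ν q t, Differentiable ℝ (fun u => α ν q u t)) :
    ∀ (q : Fin n → ℝ) (u : Fin m → ℝ) (t : ℝ),
      -- E*
      (∑ r, u r *
          fderiv ℝ (fun u' => L q (u', fun ν => α ν q u' t) t) u (Pi.single r 1))
        - L q (u, fun ν => α ν q u t) t
      =
      -- E evaluated at v = (u, α (q, u, t))
      ((∑ i, u i *
            fderiv ℝ (fun v => L q v t) (u, fun ν => α ν q u t) (Pi.single i 1, 0))
        + (∑ ν, α ν q u t *
            fderiv ℝ (fun v => L q v t) (u, fun ν' => α ν' q u t) (0, Pi.single ν 1))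
        - L q (u, fun ν => α ν q u t) t)
      -- + ∑_ν (ᾱ_ν − α_ν) ∂L/∂v_{m+ν}
      + ∑ ν, ((∑ r, fderiv ℝ (fun u' => α ν q u' t) u (Pi.single r 1) * u r)
              - α ν q u t)
            * fderiv ℝ (fun v => L q v t) (u, fun ν' => α ν' q u t) (0, Pi.single ν 1) := by
  intro q u t
  set DL := fderiv ℝ (fun v => L q v t) (u, fun ν => α ν q u t)
  have hα' : ∀ ν, DifferentiableAt ℝ (fun u' => α ν q u' t) u :=
    fun ν => (hα ν q t).differentiableAt
  have hE_star : ∑ r, u r * fderiv ℝ (fun u' => L q (u', fun ν => α ν q u' t) t) u (Pi.single r 1)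
      = DL (u, 0) + ∑ ν, fderiv ℝ (fun u' => α ν q u' t) u u * DL (0, Pi.single ν 1) :=
    calc _ = fderiv ℝ (fun u' => L q (u', fun ν => α ν q u' t) t) u u :=
          sum_smul_map_single _ u
      _ = DL (u, 0) + DL (0, fun ν => fderiv ℝ (fun u' => α ν q u' t) u u) := by
          rw [fderiv_comp_graph_apply (hL q t).differentiableAt (differentiableAt_pi.2 hα'),
            fderiv_pi hα']
          rfl
      _ = _ := congrArg _ (sum_smul_map_single (DL.comp (ContinuousLinearMap.inr ℝ _ _)) _).symm
  have hE : ∑ i, u i * DL (Pi.single i 1, 0) = DL (u, 0) :=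
    sum_smul_map_single (DL.comp (ContinuousLinearMap.inl ℝ _ _)) u
  have hα_bar : ∀ ν, ∑ r, fderiv ℝ (fun u' => α ν q u' t) u (Pi.single r 1) * u r
      = fderiv ℝ (fun u' => α ν q u' t) u u := fun ν => by
    simpa only [smul_eq_mul, mul_comm] using
      sum_smul_map_single (fderiv ℝ (fun u' => α ν q u' t) u) u
  rw [hE_star, hE]
  simp only [hα_bar, sub_mul, Finset.sum_sub_distrib]
  ring

/-- With `n = m + k` and the velocity space `ℝ^n` identified with `ℝ^m × ℝ^k`
(`v = (u, w)`, `w_ν = v_{m+ν}`), let `L (q, v, t)` be differentiable in `v` and let the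
constraints be given explicitly by `v_{m+ν} = α_ν (q, u, t)` with `α_ν` differentiable in
`u`.  With the restricted Lagrangian `L* (q, u, t) = L (q, (u, α(q,u,t)), t)`, the energy
`E = ∑ᵢ vᵢ ∂L/∂vᵢ − L` and the restricted energy `E* = ∑_r u_r ∂L*/∂u_r − L*`, one has
`E* = E + ∑_ν (ᾱ_ν − α_ν) ∂L/∂v_{m+ν}` evaluated on the constraint, where
`ᾱ_ν = ∑_r (∂α_ν/∂u_r) u_r`. -/
theorem restricted_energy_eq_energy_add_correction
    {n m k : ℕ} (hn : n = m + k)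
    (L : (Fin n → ℝ) → ((Fin m → ℝ) × (Fin k → ℝ)) → ℝ → ℝ)
    (α : Fin k → (Fin n → ℝ) → (Fin m → ℝ) → ℝ → ℝ)
    (hL : ∀ q t, Differentiable ℝ (fun v => L q v t))
    (hα : ∀ ν q t, Differentiable ℝ (fun u => α ν q u t)) :
    ∀ (q : Fin n → ℝ) (u : Fin m → ℝ) (t : ℝ),
      -- E*
      (∑ r, u r *
          fderiv ℝ (fun u' => L q (u', fun ν => α ν q u' t) t) u (Pi.single r 1))
        - L q (u, fun ν => α ν q u t) t
      =
      -- E evaluated at v = (u, α (q, u, t))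
      ((∑ i, u i *
            fderiv ℝ (fun v => L q v t) (u, fun ν => α ν q u t) (Pi.single i 1, 0))
        + (∑ ν, α ν q u t *
            fderiv ℝ (fun v => L q v t) (u, fun ν' => α ν' q u t) (0, Pi.single ν 1))
        - L q (u, fun ν => α ν q u t) t)
      -- + ∑_ν (ᾱ_ν − α_ν) ∂L/∂v_{m+ν}
      + ∑ ν, ((∑ r, fderiv ℝ (fun u' => α ν q u' t) u (Pi.single r 1) * u r)
              - α ν q u t)
            * fderiv ℝ (fun v => L q v t) (u, fun ν' => α ν' q u t) (0, Pi.single ν 1) :=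
  restricted_energy_eq_energy_add_correction_general L α hL hα
end

section
/- Let n = m + k, let L(q, v, t) be differentiable in v, and let α_ν(q, u, t), ν = 1, …, k, be differentiable in u and satisfy ᾱ_ν = α_ν identically, where ᾱ_ν := Σ_{r=1}^m (∂α_ν/∂u_r) u_r. Then the restricted energy coincides with the full energy evaluated on the constraint: E*(q, u, t) = E(q, (u, α(q,u,t)), t) for all (q, u, t), where L*(q,u,t) := L(q, (u, α(q,u,t)), t), E := Σ_{i=1}^n v_i ∂L/∂v_i − L and E* := Σ_{r=1}^m u_r ∂L*/∂u_r − L*. -/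
/-!
Differentiating `L* (u) = L (u, α u)` along the Euler direction `u` gives, by the chain rule,
`∂L*(u)·u = ∂L(u, α u)·(u, ∂α(u)·u)`. The hypothesis `ᾱ = α` says precisely `∂α(u)·u = α u`,
so both energies are `∂L(v)·v - L(v)` at the constrained velocity `v = (u, α u)`.
-/

open scoped BigOperators

theorem ContinuousLinearMap.sum_smul_apply_single {R M ι : Type*} [CommSemiring R]
    [TopologicalSpace R] [AddCommMonoid M] [Module R M] [TopologicalSpace M]
    [Fintype ι] [DecidableEq ι] (f : (ι → R) →L[R] M) (x : ι → R) :
    ∑ i, x i • f (Pi.single i 1) = f x := by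
  conv_rhs => rw [pi_eq_sum_univ' x, map_sum]
  simp only [map_smul]

theorem ContinuousLinearMap.sum_smul_apply_single_add_sum {R M ι κ : Type*} [CommSemiring R]
    [TopologicalSpace R] [AddCommMonoid M] [Module R M] [TopologicalSpace M]
    [Fintype ι] [DecidableEq ι] [Fintype κ] [DecidableEq κ]
    (D : (ι → R) × (κ → R) →L[R] M) (x : ι → R) (y : κ → R) :
    ∑ i, x i • D (Pi.single i 1, 0) + ∑ j, y j • D (0, Pi.single j 1) = D (x, y) := by
  have hinl := (D.comp (inl R (ι → R) (κ → R))).sum_smul_apply_single x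
  have hinr := (D.comp (inr R (ι → R) (κ → R))).sum_smul_apply_single y
  simp only [comp_apply, inl_apply, inr_apply] at hinl hinr
  rw [hinl, hinr, ← map_add, Prod.mk_add_mk, add_zero, zero_add]

theorem fderiv_comp_prodMk_apply {𝕜 E F G : Type*} [NontriviallyNormedField 𝕜]
    [NormedAddCommGroup E] [NormedSpace 𝕜 E] [NormedAddCommGroup F] [NormedSpace 𝕜 F]
    [NormedAddCommGroup G] [NormedSpace 𝕜 G] {f : E × F → G} {g : E → F} {x : E}
    (hf : DifferentiableAt 𝕜 f (x, g x)) (hg : DifferentiableAt 𝕜 g x) (h : E) :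
    fderiv 𝕜 (fun y => f (y, g y)) x h = fderiv 𝕜 f (x, g x) (h, fderiv 𝕜 g x h) := by
  have hgraph : HasFDerivAt (fun y => (y, g y)) ((ContinuousLinearMap.id 𝕜 E).prod
      (fderiv 𝕜 g x)) x := (hasFDerivAt_id x).prodMk hg.hasFDerivAt
  have hcomp : HasFDerivAt (fun y => f (y, g y))
      ((fderiv 𝕜 f (x, g x)).comp ((ContinuousLinearMap.id 𝕜 E).prod (fderiv 𝕜 g x))) x :=
    hf.hasFDerivAt.comp x hgraph
  rw [hcomp.fderiv]
  rfl

theorem restricted_energy_eq_energy_of_abar_eq_alpha_general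
    {n m k : ℕ}
    (L : (Fin n → ℝ) → ((Fin m → ℝ) × (Fin k → ℝ)) → ℝ → ℝ)
    (α : Fin k → (Fin n → ℝ) → (Fin m → ℝ) → ℝ → ℝ)
    (hL : ∀ q t, Differentiable ℝ (fun v => L q v t))
    (hα : ∀ ν q t, Differentiable ℝ (fun u => α ν q u t))
    (hbar : ∀ ν (q : Fin n → ℝ) (u : Fin m → ℝ) (t : ℝ),
        ∑ r, fderiv ℝ (fun u' => α ν q u' t) u (Pi.single r 1) * u r = α ν q u t) :
    ∀ (q : Fin n → ℝ) (u : Fin m → ℝ) (t : ℝ),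
      -- E*
      (∑ r, u r *
          fderiv ℝ (fun u' => L q (u', fun ν => α ν q u' t) t) u (Pi.single r 1))
        - L q (u, fun ν => α ν q u t) t
      =
      -- E evaluated at v = (u, α (q, u, t))
      ((∑ i, u i *
            fderiv ℝ (fun v => L q v t) (u, fun ν => α ν q u t) (Pi.single i 1, 0))
        + (∑ ν, α ν q u t *
            fderiv ℝ (fun v => L q v t) (u, fun ν' => α ν' q u t) (0, Pi.single ν 1))
        - L q (u, fun ν => α ν q u t) t) := by
  intro q u t
  have ha : DifferentiableAt ℝ (fun u' ν => α ν q u' t) u :=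
    differentiableAt_pi.2 fun ν => hα ν q t u
  have hEuler : fderiv ℝ (fun u' ν => α ν q u' t) u u = fun ν => α ν q u t := by
    rw [fderiv_pi fun ν => hα ν q t u]
    ext ν
    rw [ContinuousLinearMap.pi_apply, ← hbar ν q u t, ← ContinuousLinearMap.sum_smul_apply_single]
    simp only [smul_eq_mul, mul_comm]
  simp only [← smul_eq_mul, ContinuousLinearMap.sum_smul_apply_single_add_sum,
    ContinuousLinearMap.sum_smul_apply_single]
  rw [fderiv_comp_prodMk_apply (hL q t _) ha, hEuler]

/-- With `n = m + k` and the velocity space `ℝ^n` identified with `ℝ^m × ℝ^k`, let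
`L (q, v, t)` be differentiable in `v` and `α_ν (q, u, t)` be differentiable in `u` and
satisfy `ᾱ_ν = α_ν` identically, where `ᾱ_ν = ∑_r (∂α_ν/∂u_r) u_r`.  Then the restricted
energy `E* = ∑_r u_r ∂L*/∂u_r − L*` (with `L* (q,u,t) = L (q, (u, α(q,u,t)), t)`)
coincides with the full energy `E = ∑ᵢ vᵢ ∂L/∂vᵢ − L` evaluated on the constraint. -/
theorem restricted_energy_eq_energy_of_abar_eq_alpha
    {n m k : ℕ} (hn : n = m + k)
    (L : (Fin n → ℝ) → ((Fin m → ℝ) × (Fin k → ℝ)) → ℝ → ℝ)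
    (α : Fin k → (Fin n → ℝ) → (Fin m → ℝ) → ℝ → ℝ)
    (hL : ∀ q t, Differentiable ℝ (fun v => L q v t))
    (hα : ∀ ν q t, Differentiable ℝ (fun u => α ν q u t))
    (hbar : ∀ ν (q : Fin n → ℝ) (u : Fin m → ℝ) (t : ℝ),
        ∑ r, fderiv ℝ (fun u' => α ν q u' t) u (Pi.single r 1) * u r = α ν q u t) :
    ∀ (q : Fin n → ℝ) (u : Fin m → ℝ) (t : ℝ),
      -- E*
      (∑ r, u r *
          fderiv ℝ (fun u' => L q (u', fun ν => α ν q u' t) t) u (Pi.single r 1))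
        - L q (u, fun ν => α ν q u t) t
      =
      -- E evaluated at v = (u, α (q, u, t))
      ((∑ i, u i *
            fderiv ℝ (fun v => L q v t) (u, fun ν => α ν q u t) (Pi.single i 1, 0))
        + (∑ ν, α ν q u t *
            fderiv ℝ (fun v => L q v t) (u, fun ν' => α ν' q u t) (0, Pi.single ν 1))
        - L q (u, fun ν => α ν q u t) t) :=
  restricted_energy_eq_energy_of_abar_eq_alpha_general L α hL hα hbar
end

section
/- Let n = m + k, let L(q, v) be a C² time-independent Lagrangian (∂L/∂t = 0), and let α_ν(q, u, t), ν = 1, …, k, be C¹ functions (possibly time-dependent) satisfying ᾱ_ν = α_ν identically, where ᾱ_ν := Σ_{r=1}^m (∂α_ν/∂u_r) u_r. Let q : I → ℝ^n be a C² curve satisfying the constraints q̇_{m+ν}(t) = α_ν(q(t), u(t), t) with u(t) = (q̇₁(t), …, q̇_m(t)) and the Četaev equations of motion R_r(t) + Σ_{ν=1}^k (∂α_ν/∂u_r) R_{m+ν}(t) = 0 for r = 1, …, m, where R_j(t) := d/dt[∂L/∂v_j(q(t), q̇(t))] − ∂L/∂q_j(q(t), q̇(t)). Then the energy E(q, v)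 := Σ_{i=1}^n v_i ∂L/∂v_i − L is a first integral: t ↦ E(q(t), q̇(t)) is constant on I. In particular the energy can be conserved even when the constraints depend explicitly on time. -/
open scoped BigOperators

/-! With `n = m + k`, configurations and velocities are identified with pairs
`(first m components, last k components)`: for `x : (Fin m → ℝ) × (Fin k → ℝ)`,
`x.1 r` is the component `x_r` (`r = 1, …, m`) and `x.2 ν` is `x_{m+ν}` (`ν = 1, …, k`).
The Lagrangian here is time-independent: `L = L (q, v)`. -/

/-- Argument `(q, v)` of a time-independent Lagrangian. -/
abbrev LagArg (m k : ℕ) :=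
  ((Fin m → ℝ) × (Fin k → ℝ)) × ((Fin m → ℝ) × (Fin k → ℝ))

/-- Reduced argument `(q, u, t)` of the (possibly time-dependent) constraint functions. -/
abbrev RedArg (m k : ℕ) := ((Fin m → ℝ) × (Fin k → ℝ)) × (Fin m → ℝ) × ℝ

/-- `∂L/∂q_r`, `r = 1, …, m`. -/
noncomputable def dLdq1 {m k : ℕ} (L : LagArg m k → ℝ) (p : LagArg m k) (r : Fin m) : ℝ :=
  fderiv ℝ L p ((Pi.single r 1, 0), 0)

/-- `∂L/∂q_{m+ν}`, `ν = 1, …, k`. -/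
noncomputable def dLdq2 {m k : ℕ} (L : LagArg m k → ℝ) (p : LagArg m k) (ν : Fin k) : ℝ :=
  fderiv ℝ L p ((0, Pi.single ν 1), 0)

/-- `∂L/∂v_r`, `r = 1, …, m`. -/
noncomputable def dLdv1 {m k : ℕ} (L : LagArg m k → ℝ) (p : LagArg m k) (r : Fin m) : ℝ :=
  fderiv ℝ L p (0, (Pi.single r 1, 0))

/-- `∂L/∂v_{m+ν}`, `ν = 1, …, k`. -/
noncomputable def dLdv2 {m k : ℕ} (L : LagArg m k → ℝ) (p : LagArg m k) (ν : Fin k) : ℝ :=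
  fderiv ℝ L p (0, (0, Pi.single ν 1))

/-- `∂α_ν/∂u_r`. -/
noncomputable def dαdu {m k : ℕ} (α : Fin k → RedArg m k → ℝ) (ν : Fin k)
    (p : RedArg m k) (r : Fin m) : ℝ :=
  fderiv ℝ (α ν) p (0, Pi.single r 1, 0)

/-- The energy `E (q, v) = ∑ᵢ vᵢ ∂L/∂vᵢ − L`. -/
noncomputable def energy {m k : ℕ} (L : LagArg m k → ℝ) (p : LagArg m k) : ℝ :=
  (∑ r, p.2.1 r * dLdv1 L p r) + (∑ ν, p.2.2 ν * dLdv2 L p ν) - L p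

/-- The reduced argument `(q(t), u(t), t)` along a curve, `u(t) = (q̇₁, …, q̇_m)(t)`. -/
noncomputable def redPt {m k : ℕ} (c : ℝ → (Fin m → ℝ) × (Fin k → ℝ)) (t : ℝ) :
    RedArg m k :=
  (c t, (deriv c t).1, t)

/-- Euler–Lagrange residual `R_r = d/dt ∂L/∂v_r − ∂L/∂q_r`, `r = 1, …, m`, along a curve. -/
noncomputable def Rfst {m k : ℕ} (L : LagArg m k → ℝ)
    (c : ℝ → (Fin m → ℝ) × (Fin k → ℝ)) (r : Fin m) (t : ℝ) : ℝ :=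
  deriv (fun s => dLdv1 L (c s, deriv c s) r) t - dLdq1 L (c t, deriv c t) r

/-- Euler–Lagrange residual `R_{m+ν} = d/dt ∂L/∂v_{m+ν} − ∂L/∂q_{m+ν}` along a curve. -/
noncomputable def Rsnd {m k : ℕ} (L : LagArg m k → ℝ)
    (c : ℝ → (Fin m → ℝ) × (Fin k → ℝ)) (ν : Fin k) (t : ℝ) : ℝ :=
  deriv (fun s => dLdv2 L (c s, deriv c s) ν) t - dLdq2 L (c t, deriv c t) ν

/-!
Along any `C²` curve, the time-independence of `L` gives the energy balance
`dE/dt = ∑ᵢ q̇ᵢ Rᵢ`: the energy changes only by the power of the Euler–Lagrange residual.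
Homogeneity `ᾱ_ν = α_ν` says that the actual velocity `q̇` satisfies
`q̇_{m+ν} = ∑_r (∂α_ν/∂u_r) q̇_r`, i.e. it is itself a Četaev virtual displacement, on which
the residual does no work. Hence `dE/dt = 0`, even though `α` may depend on `t`.
-/

theorem IsPreconnected.eq_of_hasDerivAt_eq_zero {E : Type*} [NormedAddCommGroup E]
    [NormedSpace ℝ E] {f : ℝ → E} {s : Set ℝ} (hs : IsPreconnected s)
    (hf : ∀ t ∈ s, HasDerivAt f 0 t) {x y : ℝ} (hx : x ∈ s) (hy : y ∈ s) : f x = f y := by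
  have h := hs.ordConnected.convex.norm_image_sub_le_of_norm_hasDerivWithin_le
    (fun t ht => (hf t ht).hasDerivWithinAt) (fun _ _ => norm_zero.le) hx hy
  rw [zero_mul, norm_le_zero_iff, sub_eq_zero] at h
  exact h.symm

theorem Finset.sum_mul_add_sum_mul_eq_zero {ι κ R : Type*} [Fintype ι] [Fintype κ]
    [CommSemiring R] (a : κ → ι → R) (u f : ι → R) (w g : κ → R)
    (hw : ∀ ν, w ν = ∑ r, a ν r * u r) (hf : ∀ r, f r + ∑ ν, a ν r * g ν = 0) :
    ∑ r, u r * f r + ∑ ν, w ν * g ν = 0 := by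
  calc ∑ r, u r * f r + ∑ ν, w ν * g ν
      = ∑ r, u r * (f r + ∑ ν, a ν r * g ν) := by
        simp_rw [hw, Finset.sum_mul, mul_add, Finset.sum_add_distrib, Finset.mul_sum]
        rw [Finset.sum_comm]
        congr 1
        refine Finset.sum_congr rfl fun r _ => Finset.sum_congr rfl fun ν _ => by ring
    _ = 0 := Finset.sum_eq_zero fun r _ => by rw [hf r, mul_zero]

theorem ContinuousLinearMap.apply_eq_sum_single {ι : Type*} [Fintype ι] [DecidableEq ι]
    (T : (ι → ℝ) →L[ℝ] ℝ) (x : ι → ℝ) : T x = ∑ i, x i * T (Pi.single i 1) := by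
  conv_lhs => rw [pi_eq_sum_univ' x]
  simp only [map_sum, map_smul, smul_eq_mul]

theorem ContinuousLinearMap.apply_eq_sum_single_fst_add_sum_single_snd {ι κ : Type*}
    [Fintype ι] [Fintype κ] [DecidableEq ι] [DecidableEq κ]
    (T : (ι → ℝ) × (κ → ℝ) →L[ℝ] ℝ) (w : (ι → ℝ) × (κ → ℝ)) :
    T w = ∑ r, w.1 r * T (Pi.single r 1, 0) + ∑ ν, w.2 ν * T (0, Pi.single ν 1) := by
  rw [← T.comp_inl_add_comp_inr, (T.comp _).apply_eq_sum_single, (T.comp _).apply_eq_sum_single]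
  rfl

section LagrangianMechanics

variable {V : Type*} [NormedAddCommGroup V] [NormedSpace ℝ V] {L : V × V → ℝ} {c : ℝ → V}

/-- `R(t) = d/dt (∂L/∂v) − ∂L/∂q` along `t ↦ (c t, ċ t)`, as a covector on `V`. -/
noncomputable def eulerLagrangeResidual (L : V × V → ℝ) (c : ℝ → V) (t : ℝ) : V →L[ℝ] ℝ :=
  (deriv (fun s => fderiv ℝ L (c s, deriv c s)) t).comp (.inr ℝ V V) -
    (fderiv ℝ L (c t, deriv c t)).comp (.inl ℝ V V)

theorem differentiable_fderiv_comp_lift (hL : ContDiff ℝ 2 L) (hc : ContDiff ℝ 2 c) :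
    Differentiable ℝ (fun s => fderiv ℝ L (c s, deriv c s)) :=
  (hL.fderiv_right (m := 1) le_rfl).differentiable one_ne_zero |>.comp
    (hc.differentiable two_ne_zero |>.prodMk hc.differentiable_deriv_two)

theorem hasDerivAt_fderiv_apply_sub (hL : ContDiff ℝ 2 L) (hc : ContDiff ℝ 2 c) (t : ℝ) :
    HasDerivAt (fun s => fderiv ℝ L (c s, deriv c s) (0, deriv c s) - L (c s, deriv c s))
      (eulerLagrangeResidual L c t (deriv c t)) t := by
  have hv := (hc.differentiable_deriv_two t).hasDerivAt
  have hγ := (hc.differentiable two_ne_zero t).hasDerivAt.prodMk hv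
  have hmomentum := (differentiable_fderiv_comp_lift hL hc t).hasDerivAt.clm_apply
    ((hasDerivAt_const t (0 : V)).prodMk hv)
  have hlagrangian := ((hL.differentiable two_ne_zero _).hasFDerivAt).comp_hasDerivAt t hγ
  refine (hmomentum.sub hlagrangian).congr_deriv ?_
  have hsplit : ((deriv c t, deriv (deriv c) t) : V × V) =
      (deriv c t, 0) + (0, deriv (deriv c) t) := by
    simp
  rw [hsplit, map_add, eulerLagrangeResidual]
  simp only [sub_apply, ContinuousLinearMap.comp_apply,
    ContinuousLinearMap.inl_apply, ContinuousLinearMap.inr_apply]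
  ring

theorem eulerLagrangeResidual_apply (hL : ContDiff ℝ 2 L) (hc : ContDiff ℝ 2 c) (t : ℝ)
    (w : V) :
    eulerLagrangeResidual L c t w =
      deriv (fun s => fderiv ℝ L (c s, deriv c s) (0, w)) t -
        fderiv ℝ L (c t, deriv c t) (w, 0) := by
  rw [deriv_clm_apply (differentiable_fderiv_comp_lift hL hc t) (differentiableAt_const _)]
  simp [eulerLagrangeResidual]

end LagrangianMechanics

theorem energy_eq_fderiv_sub {m k : ℕ} (L : LagArg m k → ℝ) (p : LagArg m k) :
    energy L p = fderiv ℝ L p (0, p.2) - L p := by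
  have h := ((fderiv ℝ L p).comp (.inr ℝ _ _)).apply_eq_sum_single_fst_add_sum_single_snd p.2
  exact congrArg (· - L p) h.symm

theorem eulerLagrangeResidual_apply_eq_sum {m k : ℕ} {L : LagArg m k → ℝ} (hL : ContDiff ℝ 2 L)
    {c : ℝ → (Fin m → ℝ) × (Fin k → ℝ)} (hc : ContDiff ℝ 2 c) (t : ℝ)
    (w : (Fin m → ℝ) × (Fin k → ℝ)) :
    eulerLagrangeResidual L c t w = ∑ r, w.1 r * Rfst L c r t + ∑ ν, w.2 ν * Rsnd L c ν t := by
  rw [(eulerLagrangeResidual L c t).apply_eq_sum_single_fst_add_sum_single_snd]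
  simp only [eulerLagrangeResidual_apply hL hc]
  rfl

theorem hasDerivAt_energy {m k : ℕ} {L : LagArg m k → ℝ} (hL : ContDiff ℝ 2 L)
    {c : ℝ → (Fin m → ℝ) × (Fin k → ℝ)} (hc : ContDiff ℝ 2 c) (t : ℝ) :
    HasDerivAt (fun s => energy L (c s, deriv c s))
      (∑ r, (deriv c t).1 r * Rfst L c r t + ∑ ν, (deriv c t).2 ν * Rsnd L c ν t) t := by
  simp_rw [energy_eq_fderiv_sub, ← eulerLagrangeResidual_apply_eq_sum hL hc]
  exact hasDerivAt_fderiv_apply_sub hL hc t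

theorem energy_first_integral_of_homogeneous_constraints_general
    {m k : ℕ}
    (L : LagArg m k → ℝ) (hL : ContDiff ℝ 2 L)
    (α : Fin k → RedArg m k → ℝ)
    (hbar : ∀ ν : Fin k, ∀ p : RedArg m k, ∑ r, dαdu α ν p r * p.2.1 r = α ν p)
    {I : Set ℝ} (hIconn : IsPreconnected I)
    (c : ℝ → (Fin m → ℝ) × (Fin k → ℝ)) (hc : ContDiff ℝ 2 c)
    (hconstr : ∀ t ∈ I, ∀ ν : Fin k, (deriv c t).2 ν = α ν (redPt c t))
    (hCet : ∀ t ∈ I, ∀ r : Fin m,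
      Rfst L c r t + ∑ ν, dαdu α ν (redPt c t) r * Rsnd L c ν t = 0) :
    ∀ t₁ ∈ I, ∀ t₂ ∈ I,
      energy L (c t₁, deriv c t₁) = energy L (c t₂, deriv c t₂) := by
  intro t₁ ht₁ t₂ ht₂
  refine hIconn.eq_of_hasDerivAt_eq_zero (f := fun s => energy L (c s, deriv c s))
    (fun t ht => ?_) ht₁ ht₂
  have hvirtual : ∀ ν, (deriv c t).2 ν = ∑ r, dαdu α ν (redPt c t) r * (deriv c t).1 r :=
    fun ν => (hconstr t ht ν).trans (hbar ν (redPt c t)).symm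
  have hE := hasDerivAt_energy hL hc t
  rwa [Finset.sum_mul_add_sum_mul_eq_zero _ _ _ _ _ hvirtual (hCet t ht)] at hE

/-- Energy conservation for homogeneous nonholonomic constraints.  Let `L (q, v)` be a
`C²` time-independent Lagrangian and let the (possibly time-dependent) constraint
functions `α_ν (q, u, t)` be `C¹` and satisfy `ᾱ_ν = α_ν` identically, where
`ᾱ_ν = ∑_r (∂α_ν/∂u_r) u_r`.  If a `C²` curve satisfies the constraints
`q̇_{m+ν} = α_ν (q, q̇₁, …, q̇_m, t)` on the open interval `I` together with the Четаев
equations of motion `R_r + ∑_ν (∂α_ν/∂u_r) R_{m+ν} = 0`, then the energy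
`E = ∑ᵢ vᵢ ∂L/∂vᵢ − L` is a first integral: `t ↦ E (q(t), q̇(t))` is constant on `I`.
In particular the energy can be conserved even for rheonomic constraints. -/
theorem energy_first_integral_of_homogeneous_constraints
    {m k : ℕ}
    (L : LagArg m k → ℝ) (hL : ContDiff ℝ 2 L)
    (α : Fin k → RedArg m k → ℝ) (hα : ∀ ν, ContDiff ℝ 1 (α ν))
    (hbar : ∀ ν : Fin k, ∀ p : RedArg m k, ∑ r, dαdu α ν p r * p.2.1 r = α ν p)
    {I : Set ℝ} (hIopen : IsOpen I) (hIconn : IsPreconnected I)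
    (c : ℝ → (Fin m → ℝ) × (Fin k → ℝ)) (hc : ContDiff ℝ 2 c)
    (hconstr : ∀ t ∈ I, ∀ ν : Fin k, (deriv c t).2 ν = α ν (redPt c t))
    (hCet : ∀ t ∈ I, ∀ r : Fin m,
      Rfst L c r t + ∑ ν, dαdu α ν (redPt c t) r * Rsnd L c ν t = 0) :
    ∀ t₁ ∈ I, ∀ t₂ ∈ I,
      energy L (c t₁, deriv c t₁) = energy L (c t₂, deriv c t₂) :=
  energy_first_integral_of_homogeneous_constraints_general L hL α hbar hIconn c hc hconstr hCet
end
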